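/- ℓ1-norm bound for lasso (Theorem 3.1, second part): Let c > 1 and c̄ = (c+1)/(c−1). Suppose κ(c̄) > 0 and κ(2c̄) > 0, λ > 0, and λ ≥ c·n·‖S‖_∞. Then any lasso estimator β̂ satisfies ‖β̂ − β0‖₁ ≤ max{ (1+2c̄)√s·‖β̂ − β0‖_{2,n}/κ(2c̄) , (1 + 1/(2c̄))·(2c/(c−1))·(n/λ)·c_s² }. -/

import Mathlib

/-!
Put `δ = β̂ - β0`, `t = ‖δ_T‖₁`, `u = ‖δ_{Tᶜ}‖₁`, `a = ‖δ‖_{2,n}`. Comparing the lasso objective at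
`β̂` and at `β0`, and using Hölder for the score and Cauchy–Schwarz for the approximation error,
gives the basic inequality `a² ≤ (λ/n)(t - u) + ‖S‖_∞ (t + u) + 2 c_s a`, where
`‖S‖_∞ ≤ λ/(cn)`. If `u ≤ 2c̄ t`, then `δ` lies in the cone of `κ(2c̄)`, so
`κ(2c̄) t ≤ √s a` and `t + u ≤ (1 + 2c̄) t`. Otherwise the penalty `(λ/n)(1 - 1/c) u` outweighs
`(λ/n)(1 + 1/c) t`, and the basic inequality can only hold if `u ≤ (2c/(c-1)) (n/λ) c_s²`,
while `t < u / (2c̄)`.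
-/

open Finset MeasureTheory ProbabilityTheory

noncomputable section

/-- Prediction norm `‖δ‖_{2,n} = ((1/n) ∑_i (x_i'δ)²)^{1/2}`. -/
def predNorm (n p : ℕ) (x : Fin n → Fin p → ℝ) (δ : Fin p → ℝ) : ℝ :=
  Real.sqrt ((n : ℝ)⁻¹ * ∑ i, (∑ j, x i j * δ j) ^ 2)

/-- Least-squares criterion `Q̂(β) = (1/n) ∑_i (y_i - x_i'β)²`. -/
def Qls (n p : ℕ) (x : Fin n → Fin p → ℝ) (y : Fin n → ℝ) (β : Fin p → ℝ) : ℝ :=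
  (n : ℝ)⁻¹ * ∑ i, (y i - ∑ j, x i j * β j) ^ 2

/-- ℓ1-norm on `ℝ^p`. -/
def l1 {p : ℕ} (v : Fin p → ℝ) : ℝ := ∑ j, |v j|

/-- sup-norm (max-absolute-coordinate norm) on `ℝ^p`. -/
def supNorm {p : ℕ} (v : Fin p → ℝ) : ℝ := ⨆ j, |v j|

/-- `restr A δ` is `δ` with coordinates outside `A` set to `0`. -/
def restr {p : ℕ} (A : Finset (Fin p)) (δ : Fin p → ℝ) : Fin p → ℝ :=
  fun j => if j ∈ A then δ j else 0

/-- Support of a vector, as a finset. -/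
def suppF {p : ℕ} (v : Fin p → ℝ) : Finset (Fin p) :=
  Finset.univ.filter (fun j => v j ≠ 0)

/-- Restricted eigenvalue `κ(c̄)`. -/
def kappaRE (n p : ℕ) (x : Fin n → Fin p → ℝ) (T : Finset (Fin p)) (cbar : ℝ) : ℝ :=
  sInf {r : ℝ | ∃ δ : Fin p → ℝ, δ ≠ 0 ∧ l1 (restr Tᶜ δ) ≤ cbar * l1 (restr T δ) ∧
    r = Real.sqrt T.card * predNorm n p x δ / l1 (restr T δ)}

/-- Restricted sparse maximal eigenvalue `φ(m)`. -/
def phiRSE (n p : ℕ) (x : Fin n → Fin p → ℝ) (T : Finset (Fin p)) (m : ℕ) : ℝ :=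
  sSup {r : ℝ | ∃ δ : Fin p → ℝ, δ ≠ 0 ∧ (suppF (restr Tᶜ δ)).card ≤ m ∧
    r = (predNorm n p x δ) ^ 2 / ∑ j, δ j ^ 2}

/-- Restricted sparse minimal eigenvalue `κ̃(m)²`. -/
def kappaTildeSq (n p : ℕ) (x : Fin n → Fin p → ℝ) (T : Finset (Fin p)) (m : ℕ) : ℝ :=
  sInf {r : ℝ | ∃ δ : Fin p → ℝ, δ ≠ 0 ∧ (suppF (restr Tᶜ δ)).card ≤ m ∧
    r = (predNorm n p x δ) ^ 2 / ∑ j, δ j ^ 2}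

/-- The condition number `μ(m) = √φ(m)/κ̃(m)`. -/
def muCond (n p : ℕ) (x : Fin n → Fin p → ℝ) (T : Finset (Fin p)) (m : ℕ) : ℝ :=
  Real.sqrt (phiRSE n p x T m) / Real.sqrt (kappaTildeSq n p x T m)

section Norms

variable {p : ℕ}

lemma l1_nonneg (v : Fin p → ℝ) : 0 ≤ l1 v :=
  sum_nonneg fun _ _ => abs_nonneg _

lemma l1_restr (A : Finset (Fin p)) (δ : Fin p → ℝ) : l1 (restr A δ) = ∑ j ∈ A, |δ j| := by
  simp only [l1, restr, apply_ite, abs_zero, sum_ite_mem, univ_inter]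

lemma l1_eq_l1_restr_add_l1_restr_compl (A : Finset (Fin p)) (δ : Fin p → ℝ) :
    l1 δ = l1 (restr A δ) + l1 (restr Aᶜ δ) := by
  rw [l1_restr, l1_restr, sum_add_sum_compl, l1]

lemma abs_le_supNorm (v : Fin p → ℝ) (j : Fin p) : |v j| ≤ supNorm v :=
  le_ciSup (f := fun k => |v k|) (Set.finite_range _).bddAbove j

lemma sum_mul_le_supNorm_mul_l1 (S v : Fin p → ℝ) : ∑ j, S j * v j ≤ supNorm S * l1 v := by
  rw [l1, mul_sum]
  refine sum_le_sum fun j _ => ?_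
  calc S j * v j ≤ |S j| * |v j| := by rw [← abs_mul]; exact le_abs_self _
    _ ≤ supNorm S * |v j| := by gcongr; exact abs_le_supNorm S j

lemma l1_sub_l1_add_le {T : Finset (Fin p)} {β : Fin p → ℝ} (hβ : ∀ j ∉ T, β j = 0)
    (δ : Fin p → ℝ) : l1 β - l1 (β + δ) ≤ l1 (restr T δ) - l1 (restr Tᶜ δ) := by
  have on_T : ∑ j ∈ T, (|β j| - |β j + δ j|) ≤ ∑ j ∈ T, |δ j| :=
    sum_le_sum fun j _ =>
      (abs_sub_abs_le_abs_sub _ _).trans_eq (by rw [sub_add_cancel_left, abs_neg])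
  have off_T : ∑ j ∈ Tᶜ, (|β j| - |β j + δ j|) = -∑ j ∈ Tᶜ, |δ j| := by
    rw [← sum_neg_distrib]
    exact sum_congr rfl fun j hj => by simp [hβ j (mem_compl.1 hj)]
  rw [l1_restr, l1_restr, l1, l1, ← sum_sub_distrib, ← sum_add_sum_compl T]
  simp only [Pi.add_apply, off_T]
  linarith

end Norms

section Design

variable {n p : ℕ} (x : Fin n → Fin p → ℝ)

lemma predNorm_sq (δ : Fin p → ℝ) :
    predNorm n p x δ ^ 2 = (n : ℝ)⁻¹ * ∑ i, (∑ j, x i j * δ j) ^ 2 :=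
  Real.sq_sqrt (by positivity)

lemma sum_sub_add_sq {ι : Type*} (s : Finset ι) (y u v : ι → ℝ) :
    ∑ i ∈ s, (y i - (u i + v i)) ^ 2
      = ∑ i ∈ s, (y i - u i) ^ 2 - 2 * ∑ i ∈ s, (y i - u i) * v i + ∑ i ∈ s, v i ^ 2 := by
  rw [mul_sum, ← sum_sub_distrib, ← sum_add_distrib]
  exact sum_congr rfl fun i _ => by ring

lemma Qls_add (y : Fin n → ℝ) (β δ : Fin p → ℝ) :
    Qls n p x y (β + δ) = Qls n p x y β
      - 2 * (n : ℝ)⁻¹ * ∑ i, (y i - ∑ j, x i j * β j) * ∑ j, x i j * δ j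
      + predNorm n p x δ ^ 2 := by
  have h : ∀ i, ∑ j, x i j * (β + δ) j = ∑ j, x i j * β j + ∑ j, x i j * δ j := fun i => by
    simp only [Pi.add_apply, mul_add, sum_add_distrib]
  simp only [Qls, predNorm_sq, h, sum_sub_add_sq]
  ring

lemma sum_score_mul (e : Fin n → ℝ) (δ : Fin p → ℝ) :
    ∑ j, (2 / n * ∑ i, e i * x i j) * δ j = 2 * (n : ℝ)⁻¹ * ∑ i, e i * ∑ j, x i j * δ j := by
  simp only [mul_sum, sum_mul]
  rw [sum_comm]
  exact sum_congr rfl fun i _ => sum_congr rfl fun j _ => by ring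

lemma mean_mul_le_sqrt_mul_predNorm (r : Fin n → ℝ) (δ : Fin p → ℝ) :
    (n : ℝ)⁻¹ * ∑ i, r i * ∑ j, x i j * δ j
      ≤ √((n : ℝ)⁻¹ * ∑ i, r i ^ 2) * predNorm n p x δ := by
  have hn : (0 : ℝ) ≤ (n : ℝ)⁻¹ := by positivity
  rw [predNorm, Real.sqrt_mul hn, Real.sqrt_mul hn]
  calc (n : ℝ)⁻¹ * ∑ i, r i * ∑ j, x i j * δ j
      ≤ (√(n : ℝ)⁻¹ * √(n : ℝ)⁻¹) * (√(∑ i, r i ^ 2) * √(∑ i, (∑ j, x i j * δ j) ^ 2)) := by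
        rw [Real.mul_self_sqrt hn]
        exact mul_le_mul_of_nonneg_left (Real.sum_mul_le_sqrt_mul_sqrt _ _ _) hn
    _ = _ := by ring

lemma lasso_basic_inequality (y f : Fin n → ℝ) {T : Finset (Fin p)} {β0 : Fin p → ℝ}
    (hβ0 : ∀ j ∉ T, β0 j = 0) {lam : ℝ} (hlam : 0 ≤ lam) (δ : Fin p → ℝ)
    (hmin : Qls n p x y (β0 + δ) + lam / n * l1 (β0 + δ) ≤ Qls n p x y β0 + lam / n * l1 β0) :
    predNorm n p x δ ^ 2
      ≤ lam / n * (l1 (restr T δ) - l1 (restr Tᶜ δ))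
        + supNorm (fun j => 2 / n * ∑ i, (y i - f i) * x i j) * l1 δ
        + 2 * √((n : ℝ)⁻¹ * ∑ i, (f i - ∑ j, x i j * β0 j) ^ 2) * predNorm n p x δ := by
  have noise_add_approx : ∑ i, (y i - ∑ j, x i j * β0 j) * ∑ j, x i j * δ j
      = ∑ i, (y i - f i) * ∑ j, x i j * δ j
        + ∑ i, (f i - ∑ j, x i j * β0 j) * ∑ j, x i j * δ j := by
    rw [← sum_add_distrib]
    exact sum_congr rfl fun i _ => by ring
  have noise := sum_mul_le_supNorm_mul_l1 (fun j => 2 / n * ∑ i, (y i - f i) * x i j) δ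
  have approx := mean_mul_le_sqrt_mul_predNorm x (fun i => f i - ∑ j, x i j * β0 j) δ
  have penalty := mul_le_mul_of_nonneg_left (l1_sub_l1_add_le hβ0 δ)
    (div_nonneg hlam n.cast_nonneg)
  rw [sum_score_mul] at noise
  rw [Qls_add, noise_add_approx] at hmin
  linarith

lemma kappaRE_mul_l1_restr_le {T : Finset (Fin p)} {C : ℝ} {δ : Fin p → ℝ}
    (hcone : l1 (restr Tᶜ δ) ≤ C * l1 (restr T δ)) :
    kappaRE n p x T C * l1 (restr T δ) ≤ √T.card * predNorm n p x δ := by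
  rcases (l1_nonneg (restr T δ)).eq_or_lt with hzero | hpos
  · rw [← hzero, mul_zero]
    exact mul_nonneg (Real.sqrt_nonneg _) (Real.sqrt_nonneg _)
  · have hδ : δ ≠ 0 := by
      rintro rfl
      simp [l1_restr] at hpos
    have hbdd : BddBelow {r : ℝ | ∃ δ : Fin p → ℝ, δ ≠ 0 ∧ l1 (restr Tᶜ δ) ≤ C * l1 (restr T δ) ∧
        r = √T.card * predNorm n p x δ / l1 (restr T δ)} := by
      refine ⟨0, ?_⟩
      rintro _ ⟨δ', -, -, rfl⟩
      exact div_nonneg (mul_nonneg (Real.sqrt_nonneg _) (Real.sqrt_nonneg _)) (l1_nonneg _)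
    exact (le_div_iff₀ hpos).1 (csInf_le hbdd ⟨δ, hδ, hcone, rfl⟩)

end Design

/- With `K = L - L/c` we have `L + L/c = c̄ K`, so outside the cone `u ≤ 2 c̄ t` the basic
inequality forces `K u / 2 ≤ 2 c_s a - a² ≤ c_s²`. -/
lemma add_le_of_basic_inequality_of_lt {a cs t u c cbar L : ℝ} (hc : 1 < c)
    (hcbar : cbar = (c + 1) / (c - 1)) (hL : 0 < L)
    (hbasic : a ^ 2 - 2 * cs * a + (L - L / c) * u ≤ (L + L / c) * t)
    (hu : 2 * cbar * t < u) :
    t + u ≤ (1 + 1 / (2 * cbar)) * (2 * c / (c - 1)) * L⁻¹ * cs ^ 2 := by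
  have hc1 : 0 < c - 1 := by linarith
  have hcbar_pos : 0 < cbar := by rw [hcbar]; exact div_pos (by linarith) hc1
  have hK : 0 < L - L / c := sub_pos.2 (div_lt_self hL hc)
  have hLK : L + L / c = cbar * (L - L / c) := by
    rw [hcbar]; field_simp
  have hu_le : u ≤ 2 * c / (c - 1) * L⁻¹ * cs ^ 2 := by
    have hpenalty : 2 * ((L + L / c) * t) < (L - L / c) * u := by
      rw [hLK]
      linarith [mul_lt_mul_of_pos_left hu hK]
    have : (L - L / c) * u ≤ 2 * cs ^ 2 := by linarith [sq_nonneg (a - cs)]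
    rw [show 2 * c / (c - 1) * L⁻¹ * cs ^ 2 = 2 * cs ^ 2 / (L - L / c) by
      field_simp]
    exact (le_div_iff₀ hK).2 (by linarith)
  have ht : t ≤ 1 / (2 * cbar) * u := by
    rw [div_mul_eq_mul_div, one_mul, le_div_iff₀ (by positivity)]
    linarith
  calc t + u ≤ (1 + 1 / (2 * cbar)) * u := by linarith
    _ ≤ _ := by linarith [mul_le_mul_of_nonneg_left hu_le (by positivity : 0 ≤ 1 + 1 / (2 * cbar))]

theorem lasso_l1_norm_bound_general
    (n p : ℕ) (hn : 0 < n)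
    (x : Fin n → Fin p → ℝ) (y f : Fin n → ℝ)
    (β0 : Fin p → ℝ) (T : Finset (Fin p)) (hT : T = suppF β0)
    (s : ℕ) (hs : s = T.card)
    (cs : ℝ) (hcs : cs = Real.sqrt ((n : ℝ)⁻¹ * ∑ i, (f i - ∑ j, x i j * β0 j) ^ 2))
    (c : ℝ) (hc : 1 < c) (cbar : ℝ) (hcbar : cbar = (c + 1) / (c - 1))
    (hκ2 : 0 < kappaRE n p x T (2 * cbar))
    (S : Fin p → ℝ) (hS : S = fun j => (2 / n : ℝ) * ∑ i, (y i - f i) * x i j)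
    (lam : ℝ) (hlam : 0 < lam) (hlamS : c * n * supNorm S ≤ lam)
    (βhat : Fin p → ℝ)
    (hβhat : ∀ β : Fin p → ℝ,
      Qls n p x y βhat + lam / n * l1 βhat ≤ Qls n p x y β + lam / n * l1 β) :
    l1 (βhat - β0) ≤
      max ((1 + 2 * cbar) * Real.sqrt s * predNorm n p x (βhat - β0) /
            kappaRE n p x T (2 * cbar))
          ((1 + 1 / (2 * cbar)) * (2 * c / (c - 1)) * (n / lam) * cs ^ 2) := by
  have hβ0 : ∀ j ∉ T, β0 j = 0 := by simp [hT, suppF]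
  have hL : 0 < lam / n := div_pos hlam (Nat.cast_pos.2 hn)
  set δ := βhat - β0 with hδ
  have hbasic := lasso_basic_inequality x y f hβ0 hlam.le δ
    (by rw [hδ, add_sub_cancel]; exact hβhat β0)
  have hsup : supNorm S ≤ lam / n / c := by
    rw [le_div_iff₀ (by linarith), le_div_iff₀ (Nat.cast_pos.2 hn)]
    linarith
  rw [← hS, ← hcs, l1_eq_l1_restr_add_l1_restr_compl T δ] at hbasic
  rw [l1_eq_l1_restr_add_l1_restr_compl T δ, hs]
  have hnoise := mul_le_mul_of_nonneg_right hsup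
    (add_nonneg (l1_nonneg (restr T δ)) (l1_nonneg (restr Tᶜ δ)))
  rcases le_or_gt (l1 (restr Tᶜ δ)) (2 * cbar * l1 (restr T δ)) with hcone | hcone
  · refine le_max_of_le_left ((le_div_iff₀ hκ2).2 ?_)
    have hcbar_pos : 0 < cbar := by rw [hcbar]; exact div_pos (by linarith) (by linarith)
    linarith [mul_le_mul_of_nonneg_left (kappaRE_mul_l1_restr_le x hcone)
      (by positivity : 0 ≤ 1 + 2 * cbar), mul_le_mul_of_nonneg_right hcone hκ2.le]
  · refine le_max_of_le_right ?_
    rw [← inv_div lam (n : ℝ)]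
    exact add_le_of_basic_inequality_of_lt (a := predNorm n p x δ) (cs := cs) hc hcbar hL
      (by linarith) hcone

/-- Theorem 3.1, second part: ℓ1-norm bound for lasso. -/
theorem lasso_l1_norm_bound
    (n p : ℕ) (hn : 0 < n) (hp : 0 < p)
    (x : Fin n → Fin p → ℝ) (y f : Fin n → ℝ)
    (hx : ∀ j, (n : ℝ)⁻¹ * ∑ i, x i j ^ 2 = 1)
    (β0 : Fin p → ℝ) (T : Finset (Fin p)) (hT : T = suppF β0)
    (s : ℕ) (hs : s = T.card) (hs1 : 1 ≤ s)
    (cs : ℝ) (hcs : cs = Real.sqrt ((n : ℝ)⁻¹ * ∑ i, (f i - ∑ j, x i j * β0 j) ^ 2))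
    (c : ℝ) (hc : 1 < c) (cbar : ℝ) (hcbar : cbar = (c + 1) / (c - 1))
    (hκ1 : 0 < kappaRE n p x T cbar) (hκ2 : 0 < kappaRE n p x T (2 * cbar))
    (S : Fin p → ℝ) (hS : S = fun j => (2 / n : ℝ) * ∑ i, (y i - f i) * x i j)
    (lam : ℝ) (hlam : 0 < lam) (hlamS : c * n * supNorm S ≤ lam)
    (βhat : Fin p → ℝ)
    (hβhat : ∀ β : Fin p → ℝ,
      Qls n p x y βhat + lam / n * l1 βhat ≤ Qls n p x y β + lam / n * l1 β) :
    l1 (βhat - β0) ≤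
      max ((1 + 2 * cbar) * Real.sqrt s * predNorm n p x (βhat - β0) /
            kappaRE n p x T (2 * cbar))
          ((1 + 1 / (2 * cbar)) * (2 * c / (c - 1)) * (n / lam) * cs ^ 2) :=
  lasso_l1_norm_bound_general n p hn x y f β0 T hT s hs cs hcs c hc cbar hcbar hκ2 S hS lam hlam
    hlamS βhat hβhat
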